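/- arXiv:1301.5712 — 6 statements merged into one kernel-verified Lean document; each statement's English description precedes it below -/
import Mathlib

section
/- For any unit vectors a and ŷ in R³ and any positive integer n, there exists a homogeneous harmonic polynomial h of degree n on R³ such that a·∇h(ŷ) = 1 and max over the unit sphere of |h| is at most √3/n. -/
/-!
Choose a unit vector `e ⟂ ŷ` with `a ∈ span {ŷ, e}` and put `w = ŷ + i e`. Since `w · w = 0`,
the power `(w · x)ⁿ` is harmonic, and so is `h = Re (conj γ (w · x)ⁿ) / n` with `γ = w · a`.
As `w · ŷ = 1`, the directional derivative is `a · ∇h(ŷ) = Re (conj γ γ) = ‖a‖² = 1`, while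
Bessel's inequality `|w · x| ≤ ‖x‖` gives `|h| ≤ 1 / n` on the unit sphere.
-/
open MvPolynomial RealInnerProductSpace Complex ComplexConjugate

noncomputable section

namespace MvPolynomial

section Laplacian

variable {σ R : Type*} [Fintype σ] [CommRing R]

def laplacian (p : MvPolynomial σ R) : MvPolynomial σ R :=
  ∑ i, pderiv i (pderiv i p)

theorem laplacian_C_mul (c : R) (p : MvPolynomial σ R) :
    laplacian (C c * p) = C c * laplacian p := by
  simp only [laplacian, pderiv_C_mul, Finset.mul_sum]

def linearForm (w : σ → R) : MvPolynomial σ R :=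
  ∑ j, C (w j) * X j

theorem pderiv_linearForm (w : σ → R) (i : σ) : pderiv i (linearForm w) = C (w i) := by
  classical
  simp [linearForm, pderiv_X, Pi.single_apply]

theorem eval_linearForm (w x : σ → R) : eval x (linearForm w) = ∑ j, w j * x j := by
  simp [linearForm]

theorem isHomogeneous_linearForm (w : σ → R) : (linearForm w).IsHomogeneous 1 :=
  IsHomogeneous.sum _ _ _ fun j _ => (isHomogeneous_X R j).C_mul (w j)

theorem pderiv_linearForm_pow (w : σ → R) (n : ℕ) (i : σ) :
    pderiv i (linearForm w ^ n) = C (n * w i) * linearForm w ^ (n - 1) := by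
  rw [Derivation.leibniz_pow, pderiv_linearForm, map_mul, map_natCast, nsmul_eq_mul, smul_eq_mul]
  ring

theorem laplacian_linearForm_pow {w : σ → R} (hw : ∑ i, w i ^ 2 = 0) (n : ℕ) :
    laplacian (linearForm w ^ n) = 0 := by
  have hsecond (i : σ) : pderiv i (pderiv i (linearForm w ^ n)) =
      C (n * (n - 1 : ℕ) * w i ^ 2 : R) * linearForm w ^ (n - 1 - 1) := by
    rw [pderiv_linearForm_pow, pderiv_C_mul, pderiv_linearForm_pow, ← mul_assoc, ← map_mul]
    ring_nf
  simp only [laplacian, hsecond, ← Finset.sum_mul, ← map_sum, ← Finset.mul_sum, hw, mul_zero,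
    map_zero, zero_mul]

end Laplacian

section RealPart

variable {σ : Type*}

def rePart (p : MvPolynomial σ ℂ) : MvPolynomial σ ℝ :=
  AddMonoidAlgebra.map Complex.reAddGroupHom p

@[simp]
theorem coeff_rePart (p : MvPolynomial σ ℂ) (m : σ →₀ ℕ) : coeff m (rePart p) = (coeff m p).re :=
  rfl

theorem rePart_add (p q : MvPolynomial σ ℂ) : rePart (p + q) = rePart p + rePart q := by
  ext; simp

theorem rePart_monomial (m : σ →₀ ℕ) (c : ℂ) : rePart (monomial m c) = monomial m c.re := by
  classical
  ext m'
  rw [coeff_rePart, coeff_monomial, coeff_monomial]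
  split_ifs <;> simp

theorem IsHomogeneous.rePart {p : MvPolynomial σ ℂ} {n : ℕ} (hp : p.IsHomogeneous n) :
    (rePart p).IsHomogeneous n := fun m hm => hp fun h => hm (by simp [h])

theorem pderiv_rePart (p : MvPolynomial σ ℂ) (i : σ) :
    pderiv i (rePart p) = rePart (pderiv i p) := by
  ext; simp [coeff_pderiv]

theorem laplacian_rePart [Fintype σ] (p : MvPolynomial σ ℂ) :
    laplacian (rePart p) = rePart (laplacian p) := by
  ext; simp [laplacian, pderiv_rePart, coeff_sum]

theorem eval_rePart (x : σ → ℝ) (p : MvPolynomial σ ℂ) :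
    eval x (rePart p) = (eval (fun j => (x j : ℂ)) p).re := by
  induction p using MvPolynomial.induction_on' with
  | monomial m c =>
    simp only [rePart_monomial, eval_monomial, Finsupp.prod, ← Complex.ofReal_pow,
      ← Complex.ofReal_prod, Complex.re_mul_ofReal]
  | add p q hp hq => simp only [rePart_add, map_add, Complex.add_re, hp, hq]

end RealPart

section RePartLinearFormPow

variable {σ : Type*} [Fintype σ]

theorem isHomogeneous_rePart_C_mul_linearForm_pow (c : ℂ) (w : σ → ℂ) (n : ℕ) :
    (rePart (C c * linearForm w ^ n)).IsHomogeneous n := by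
  simpa using (((isHomogeneous_linearForm w).pow n).C_mul c).rePart

theorem laplacian_rePart_C_mul_linearForm_pow (c : ℂ) {w : σ → ℂ} (hw : ∑ i, w i ^ 2 = 0)
    (n : ℕ) : laplacian (rePart (C c * linearForm w ^ n)) = 0 := by
  rw [laplacian_rePart, laplacian_C_mul, laplacian_linearForm_pow hw, mul_zero]
  ext; simp

theorem eval_rePart_C_mul_linearForm_pow (c : ℂ) (w : σ → ℂ) (n : ℕ) (x : σ → ℝ) :
    eval x (rePart (C c * linearForm w ^ n)) =
      (c * eval (fun j => (x j : ℂ)) (linearForm w) ^ n).re := by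
  simp [eval_rePart]

theorem sum_mul_eval_pderiv_rePart_C_mul_linearForm_pow (c : ℂ) (w : σ → ℂ) (n : ℕ)
    (a x : σ → ℝ) :
    ∑ i, a i * eval x (pderiv i (rePart (C c * linearForm w ^ n))) =
      (c * n * eval (fun j => (x j : ℂ)) (linearForm w) ^ (n - 1) *
        eval (fun j => (a j : ℂ)) (linearForm w)).re := by
  rw [eval_linearForm w (fun j => (a j : ℂ)), Finset.mul_sum, re_sum]
  refine Finset.sum_congr rfl fun i _ => ?_
  simp only [pderiv_rePart, eval_rePart, pderiv_C_mul, pderiv_linearForm_pow, map_mul, map_pow,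
    eval_C]
  rw [mul_comm (a i), ← re_mul_ofReal]
  ring_nf

end RePartLinearFormPow

end MvPolynomial

section Orthonormal

variable {E : Type*} [NormedAddCommGroup E] [InnerProductSpace ℝ E]

theorem orthonormal_pair_iff {y e : E} :
    Orthonormal ℝ ![y, e] ↔ ‖y‖ = 1 ∧ ‖e‖ = 1 ∧ ⟪y, e⟫ = 0 := by
  refine ⟨fun h => ⟨by simpa using h.1 0, by simpa using h.1 1,
    by simpa using h.2 (show (0 : Fin 2) ≠ 1 by decide)⟩, fun ⟨hy, he, hye⟩ => ?_⟩
  rw [orthonormal_iff_ite]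
  simp [Fin.forall_fin_two, hy, he, hye, real_inner_comm y e]

theorem exists_norm_eq_one_inner_eq_zero (hE : 2 ≤ Module.finrank ℝ E) (y : E) :
    ∃ e : E, ‖e‖ = 1 ∧ ⟪y, e⟫ = 0 := by
  have hne : (ℝ ∙ y)ᗮ ≠ ⊥ := by
    intro h
    rw [Submodule.orthogonal_eq_bot_iff] at h
    have := finrank_span_le_card (R := ℝ) ({y} : Set E)
    rw [h, finrank_top] at this
    simp at this
    omega
  obtain ⟨w, hw, hw0⟩ := (Submodule.ne_bot_iff _).1 hne
  exact ⟨‖w‖⁻¹ • w, norm_smul_inv_norm hw0,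
    by rw [inner_smul_right, hw y (Submodule.mem_span_singleton_self y), mul_zero]⟩

theorem exists_orthonormal_pair_inner_sq_add (hE : 2 ≤ Module.finrank ℝ E) {y : E}
    (hy : ‖y‖ = 1) (a : E) :
    ∃ e : E, Orthonormal ℝ ![y, e] ∧ ⟪y, a⟫ ^ 2 + ⟪e, a⟫ ^ 2 = ‖a‖ ^ 2 := by
  set b := a - ⟪y, a⟫ • y
  have hyb : ⟪y, b⟫ = 0 := by
    simp [b, inner_sub_right, inner_smul_right, hy]
  obtain ⟨e, he, hye, t, hbt⟩ : ∃ e : E, ‖e‖ = 1 ∧ ⟪y, e⟫ = 0 ∧ ∃ t : ℝ, b = t • e := by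
    by_cases hb : b = 0
    · obtain ⟨e, he, hye⟩ := exists_norm_eq_one_inner_eq_zero hE y
      exact ⟨e, he, hye, 0, by simp [hb]⟩
    · refine ⟨‖b‖⁻¹ • b, norm_smul_inv_norm hb, ?_, ‖b‖, ?_⟩
      · rw [inner_smul_right, hyb, mul_zero]
      · rw [smul_smul, mul_inv_cancel₀ (norm_ne_zero_iff.2 hb), one_smul]
  have ha : a = ⟪y, a⟫ • y + t • e := by rw [← hbt, add_sub_cancel]
  refine ⟨e, orthonormal_pair_iff.2 ⟨hy, he, hye⟩, ?_⟩
  have hea : ⟪e, a⟫ = t := by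
    rw [ha]
    simp [inner_add_right, inner_smul_right, real_inner_comm y e, hye, he]
  have hpyth := norm_add_sq_eq_norm_sq_add_norm_sq_real (x := ⟪y, a⟫ • y) (y := t • e)
    (by simp [inner_smul_left, inner_smul_right, hye])
  rw [← ha, norm_smul, norm_smul, hy, he] at hpyth
  rw [hea, sq, sq, sq, hpyth]
  simp

end Orthonormal

section IsotropicForm

variable {σ : Type*} [Fintype σ]

theorem EuclideanSpace.real_inner_eq_sum (x z : EuclideanSpace ℝ σ) :
    ⟪x, z⟫ = ∑ j, x j * z j := by
  simp [PiLp.inner_apply, mul_comm]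

def isotropicVector (y e : EuclideanSpace ℝ σ) : σ → ℂ := fun j => y j + e j * I

theorem eval_linearForm_isotropicVector (y e x : EuclideanSpace ℝ σ) :
    eval (fun j => (x j : ℂ)) (linearForm (isotropicVector y e)) = ⟪y, x⟫ + ⟪e, x⟫ * I := by
  simp only [eval_linearForm, isotropicVector, EuclideanSpace.real_inner_eq_sum]
  push_cast
  rw [Finset.sum_mul, ← Finset.sum_add_distrib]
  exact Finset.sum_congr rfl fun j _ => by ring

theorem sum_isotropicVector_sq {y e : EuclideanSpace ℝ σ} (h : Orthonormal ℝ ![y, e]) :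
    ∑ j, isotropicVector y e j ^ 2 = 0 := by
  obtain ⟨hy, he, hye⟩ := orthonormal_pair_iff.1 h
  have hsq : ((⟪y, y⟫ - ⟪e, e⟫ : ℝ) : ℂ) + 2 * ⟪y, e⟫ * I = 0 := by
    simp [hy, he, hye]
  rw [← hsq]
  simp only [isotropicVector, EuclideanSpace.real_inner_eq_sum]
  push_cast
  rw [Finset.mul_sum, Finset.sum_mul, ← Finset.sum_sub_distrib, ← Finset.sum_add_distrib]
  exact Finset.sum_congr rfl fun j _ => by linear_combination (e j : ℂ) ^ 2 * I_sq

theorem eval_linearForm_isotropicVector_self {y e : EuclideanSpace ℝ σ}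
    (h : Orthonormal ℝ ![y, e]) :
    eval (fun j => (y j : ℂ)) (linearForm (isotropicVector y e)) = 1 := by
  obtain ⟨hy, -, hye⟩ := orthonormal_pair_iff.1 h
  simp [eval_linearForm_isotropicVector, hy, real_inner_comm, hye]

theorem norm_eval_linearForm_isotropicVector (y e x : EuclideanSpace ℝ σ) :
    ‖eval (fun j => (x j : ℂ)) (linearForm (isotropicVector y e))‖ =
      √(⟪y, x⟫ ^ 2 + ⟪e, x⟫ ^ 2) := by
  rw [eval_linearForm_isotropicVector, norm_add_mul_I, sq, sq]

theorem norm_eval_linearForm_isotropicVector_le {y e : EuclideanSpace ℝ σ}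
    (h : Orthonormal ℝ ![y, e]) (x : EuclideanSpace ℝ σ) :
    ‖eval (fun j => (x j : ℂ)) (linearForm (isotropicVector y e))‖ ≤ ‖x‖ := by
  have hbessel := h.sum_inner_products_le x (s := Finset.univ)
  simp only [Fin.sum_univ_two, Matrix.cons_val_zero, Matrix.cons_val_one, Real.norm_eq_abs,
    sq_abs] at hbessel
  rw [norm_eval_linearForm_isotropicVector]
  exact Real.sqrt_le_sqrt hbessel |>.trans_eq (Real.sqrt_sq (norm_nonneg x))

end IsotropicForm


/-- For any unit vectors `a` and `ŷ` in `ℝ³` and any positive integer `n`, there exists a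
homogeneous harmonic polynomial `h` of degree `n` such that `a·∇h(ŷ) = 1` and
`max_{|x|=1} |h(x)| ≤ √3/n`. -/
theorem statement0 (a yhat : EuclideanSpace ℝ (Fin 3)) (ha : ‖a‖ = 1) (hy : ‖yhat‖ = 1)
    (n : ℕ) (hn : 1 ≤ n) :
    ∃ h : MvPolynomial (Fin 3) ℝ,
      h.IsHomogeneous n ∧
      (∑ i : Fin 3, pderiv i (pderiv i h)) = 0 ∧
      (∑ i : Fin 3, a i * eval (fun j => yhat j) (pderiv i h)) = 1 ∧
      ∀ x : EuclideanSpace ℝ (Fin 3), ‖x‖ = 1 →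
        |eval (fun j => x j) h| ≤ Real.sqrt 3 / n := by
  obtain ⟨e, hye, hae⟩ := exists_orthonormal_pair_inner_sq_add (by simp) hy a
  set L := linearForm (isotropicVector yhat e)
  set γ := eval (fun j => (a j : ℂ)) L
  have hγ : ‖γ‖ = 1 := by
    rw [norm_eval_linearForm_isotropicVector, hae, Real.sqrt_sq (norm_nonneg a), ha]
  have hLy : eval (fun j => (yhat j : ℂ)) L = 1 := eval_linearForm_isotropicVector_self hye
  have hn0 : (n : ℂ) ≠ 0 := Nat.cast_ne_zero.2 (by omega)
  refine ⟨rePart (C (conj γ / n) * L ^ n), isHomogeneous_rePart_C_mul_linearForm_pow _ _ n,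
    laplacian_rePart_C_mul_linearForm_pow _ (sum_isotropicVector_sq hye) n, ?_, fun x hx => ?_⟩
  · rw [sum_mul_eval_pderiv_rePart_C_mul_linearForm_pow, hLy, one_pow, mul_one,
      div_mul_cancel₀ _ hn0, conj_mul', hγ]
    simp
  · rw [eval_rePart_C_mul_linearForm_pow]
    calc |(conj γ / n * eval (fun j => (x j : ℂ)) L ^ n).re|
        ≤ ‖conj γ / n * eval (fun j => (x j : ℂ)) L ^ n‖ := abs_re_le_norm _
      _ = ‖eval (fun j => (x j : ℂ)) L‖ ^ n / n := by simp [hγ, div_mul_eq_mul_div]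
      _ ≤ 1 / n := by
        gcongr
        exact pow_le_one₀ (norm_nonneg _)
          ((norm_eval_linearForm_isotropicVector_le hye x).trans hx.le)
      _ ≤ √3 / n := by gcongr; exact Real.one_le_sqrt.2 (by norm_num)
end
end

section
/- For each positive integer n, the polynomial h₂(x) = (1/(2ni))[(x₁+ix₂)ⁿ − (x₁−ix₂)ⁿ] is a real-valued homogeneous harmonic polynomial of degree n on R³ satisfying ∇h₂(1,0,0) = (0,1,0) and |h₂(x)| ≤ 1/n for all x with |x| = 1. -/
/-!
Write `ζ(x) = x₁ + i x₂`, a real-linear map `ℝ³ → ℂ`. Since `x₁ - i x₂ = conj ζ(x)`, the polynomial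
is `h₂ = Im(ζⁿ) / n`. Every function `Im(c ζᵐ)` is harmonic because `ζ` is holomorphic in the
plane: its Laplacian is `Im(m (m-1) c ζᵐ⁻² (ζ(e₁)² + ζ(e₂)² + ζ(e₃)²))` and
`1² + i² + 0² = 0`. Its differential at `e₁` is `Im(n ζ(e₁)ⁿ⁻¹ dζ) / n = Im dζ = dx₂`, and on the
unit sphere `|Im(ζⁿ)| ≤ |ζ|ⁿ ≤ 1`.
-/

/-- The Laplacian of a function on `ℝ³` (Euclidean space), as the sum of second partial
derivatives along the standard basis directions. -/
noncomputable def lap (f : EuclideanSpace ℝ (Fin 3) → ℝ) (x : EuclideanSpace ℝ (Fin 3)) : ℝ :=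
  ∑ i : Fin 3,
    fderiv ℝ (fun y => fderiv ℝ f y (EuclideanSpace.single i 1)) x (EuclideanSpace.single i 1)

open Complex ComplexConjugate

theorem sub_conj_pow_div (z : ℂ) (n : ℕ) :
    (z ^ n - conj z ^ n) / (2 * n * I) = ((z ^ n).im / n : ℝ) := by
  rw [← map_pow, sub_conj]
  rcases eq_or_ne n 0 with rfl | hn
  · simp
  · push_cast
    field_simp

section LinearToComplex

variable {E : Type*} [NormedAddCommGroup E] [NormedSpace ℝ E] (L : E →L[ℝ] ℂ)

theorem hasFDerivAt_im_pow_mul (m : ℕ) (c : ℂ) (x : E) :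
    HasFDerivAt (fun y => (L y ^ m * c).im) (imCLM.comp ((m * L x ^ (m - 1) * c) • L)) x := by
  have hpow := ((hasDerivAt_pow m (L x)).mul_const c).hasFDerivAt.restrictScalars ℝ
  refine (imCLM.hasFDerivAt.comp x (hpow.comp x L.hasFDerivAt)).congr_fderiv ?_
  ext v
  simp [mul_comm]

theorem fderiv_im_pow_mul_apply (m : ℕ) (c : ℂ) (x v : E) :
    fderiv ℝ (fun y => (L y ^ m * c).im) x v = (L x ^ (m - 1) * (m * c * L v)).im := by
  rw [(hasFDerivAt_im_pow_mul L m c x).fderiv]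
  simp only [ContinuousLinearMap.comp_apply, smul_apply, imCLM_apply, smul_eq_mul]
  ring_nf

theorem im_pow_mul_map_smul (m : ℕ) (c : ℂ) (t : ℝ) (x : E) :
    (L (t • x) ^ m * c).im = t ^ m * (L x ^ m * c).im := by
  rw [map_smul, real_smul, mul_pow, mul_assoc, ← ofReal_pow, im_ofReal_mul]

end LinearToComplex

noncomputable def zCoord : EuclideanSpace ℝ (Fin 3) →L[ℝ] ℂ :=
  ofRealCLM.comp (EuclideanSpace.proj 0) + I • ofRealCLM.comp (EuclideanSpace.proj 1)

theorem zCoord_apply (x : EuclideanSpace ℝ (Fin 3)) : zCoord x = x 0 + x 1 * I := by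
  simp [zCoord, mul_comm]

theorem zCoord_single_zero : zCoord (EuclideanSpace.single 0 1) = 1 := by
  simp [zCoord_apply]

theorem zCoord_single_one : zCoord (EuclideanSpace.single 1 1) = I := by
  simp [zCoord_apply]

theorem zCoord_single_two : zCoord (EuclideanSpace.single 2 1) = 0 := by
  simp [zCoord_apply]

theorem conj_zCoord (x : EuclideanSpace ℝ (Fin 3)) : conj (zCoord x) = x 0 - x 1 * I := by
  simp [zCoord_apply, sub_eq_add_neg]

theorem norm_zCoord_le (x : EuclideanSpace ℝ (Fin 3)) : ‖zCoord x‖ ≤ ‖x‖ := by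
  have hsq : ‖zCoord x‖ ^ 2 + x 2 ^ 2 = ‖x‖ ^ 2 := by
    rw [zCoord_apply, Complex.sq_norm, Complex.normSq_add_mul_I, EuclideanSpace.norm_sq_eq,
      Fin.sum_univ_three]
    simp only [Real.norm_eq_abs, sq_abs]
  exact (pow_le_pow_iff_left₀ (norm_nonneg _) (norm_nonneg _) two_ne_zero).1
    (by nlinarith [sq_nonneg (x 2)])

theorem lap_im_zCoord_pow_mul (m : ℕ) (c : ℂ) (x : EuclideanSpace ℝ (Fin 3)) :
    lap (fun y => (zCoord y ^ m * c).im) x = 0 := by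
  have hsecond : ∀ v, fderiv ℝ (fun y => fderiv ℝ (fun y => (zCoord y ^ m * c).im) y v) x v
      = (zCoord x ^ (m - 1 - 1) * ((m - 1 : ℕ) * (m * c * zCoord v) * zCoord v)).im := by
    intro v
    simp only [fderiv_im_pow_mul_apply]
  rw [lap, Fin.sum_univ_three, hsecond, hsecond, hsecond, zCoord_single_zero, zCoord_single_one,
    zCoord_single_two, ← add_im, ← add_im, ← mul_add, ← mul_add]
  have hzero : ((m - 1 : ℕ) * (m * c * 1) * 1 + (m - 1 : ℕ) * (m * c * I) * I
      + (m - 1 : ℕ) * (m * c * 0) * 0 : ℂ) = 0 := by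
    linear_combination ((m - 1 : ℕ) * m * c : ℂ) * I_sq
  rw [hzero, mul_zero, zero_im]

theorem abs_im_zCoord_pow_mul_le (m : ℕ) (c : ℂ) (x : EuclideanSpace ℝ (Fin 3)) :
    |(zCoord x ^ m * c).im| ≤ ‖x‖ ^ m * ‖c‖ :=
  calc |(zCoord x ^ m * c).im| ≤ ‖zCoord x ^ m * c‖ := abs_im_le_norm _
    _ = ‖zCoord x‖ ^ m * ‖c‖ := by rw [norm_mul, norm_pow]
    _ ≤ ‖x‖ ^ m * ‖c‖ := by gcongr; exact norm_zCoord_le x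

/-- `h₂(x) = (1/(2ni))[(x₁+ix₂)ⁿ − (x₁−ix₂)ⁿ]` is a real-valued homogeneous harmonic
polynomial of degree `n` with `∇h₂(1,0,0) = (0,1,0)` and `|h₂| ≤ 1/n` on the unit sphere. -/
theorem statement2 (n : ℕ) (hn : 1 ≤ n)
    (h₂ : EuclideanSpace ℝ (Fin 3) → ℝ)
    (hdef : ∀ x : EuclideanSpace ℝ (Fin 3),
      h₂ x = (((((x 0 : ℝ) : ℂ) + (x 1 : ℝ) * Complex.I) ^ n
              - (((x 0 : ℝ) : ℂ) - (x 1 : ℝ) * Complex.I) ^ n) / (2 * n * Complex.I)).re) :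
    (∀ x : EuclideanSpace ℝ (Fin 3),
      (((((x 0 : ℝ) : ℂ) + (x 1 : ℝ) * Complex.I) ^ n
        - (((x 0 : ℝ) : ℂ) - (x 1 : ℝ) * Complex.I) ^ n) / (2 * n * Complex.I)).im = 0)
    ∧ (∀ t : ℝ, 0 < t → ∀ x, h₂ (t • x) = t ^ n * h₂ x)
    ∧ (∀ x, lap h₂ x = 0)
    ∧ (∀ j : Fin 3,
        fderiv ℝ h₂ (EuclideanSpace.single 0 1) (EuclideanSpace.single j 1)
          = if j = 1 then 1 else 0)
    ∧ (∀ x : EuclideanSpace ℝ (Fin 3), ‖x‖ = 1 → |h₂ x| ≤ 1 / n) := by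
  have hexpr : ∀ x : EuclideanSpace ℝ (Fin 3),
      (((x 0 : ℂ) + x 1 * I) ^ n - ((x 0 : ℂ) - x 1 * I) ^ n) / (2 * n * I)
        = ((zCoord x ^ n).im / n : ℝ) := fun x => by
    rw [← zCoord_apply x, ← conj_zCoord x, sub_conj_pow_div]
  have hrep : h₂ = fun y => (zCoord y ^ n * (n : ℂ)⁻¹).im := funext fun y => by
    rw [hdef, hexpr, ofReal_re, ← ofReal_natCast, ← ofReal_inv, im_mul_ofReal, div_eq_mul_inv]
  subst hrep
  refine ⟨fun x => by rw [hexpr, ofReal_im], fun t _ x => im_pow_mul_map_smul _ _ _ t x,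
    lap_im_zCoord_pow_mul _ _, fun j => ?_, fun x hx => ?_⟩
  · have hn0 : (n : ℂ) ≠ 0 := Nat.cast_ne_zero.2 (by omega)
    rw [fderiv_im_pow_mul_apply, zCoord_single_zero, one_pow, one_mul, mul_inv_cancel₀ hn0, one_mul]
    fin_cases j <;> simp [zCoord_single_zero, zCoord_single_one, zCoord_single_two]
  · simpa [hx] using abs_im_zCoord_pow_mul_le n (n : ℂ)⁻¹ x
end

section
/- Let 0 < ρ < 1 and c_n ≥ 0 for n ≥ 0. Suppose limsup_{n→∞} (c_n ρ^{-n}) = ∞ where c_n := n r_e^{2n} (Σ_{k=-n}^n |f_n^k|)², r_e > 0, ρ = r_e/r_0. Equivalently, if limsup_{n→∞} (r_e r_0)^{n/2} Σ_{k=-n}^n |f_n^k| = ∞, then taking δ = ρᵐ along a suitable sequence m → ∞, the quantity E_δ := Σ_n Σ_k δ n r_e^{2n}|f_n^k|²/(δ² + ρ^{2n}) satisfies limsup_{δ→0} E_δ = ∞. -/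
open Filter Finset Topology
open scoped ENNReal

/-! At `δ = ρ ^ m` the denominator of the `n = m` summand is `δ² + ρ^{2m} = 2 ρ^{2m}`, so that
summand alone equals `(m / 2) (r_e r_0)^m Σ_k |f_m^k|²`, which by Cauchy–Schwarz over the
`2m + 1 ≤ 3m` indices is at least `S_m² / 6` with `S_m = (r_e r_0)^{m/2} Σ_k |f_m^k|`.
Along a subsequence with `S_{m_j} > j` this forces `E (ρ ^ m_j) ≥ j² / 6 → ∞`, and since
`ρ ^ m_j → 0⁺` the limsup at `0⁺` is infinite as well. -/

lemma pow_mul_div_sq_add_pow_two_mul_eq {a b : ℝ} (ha : a ≠ 0) (hb : b ≠ 0) (m : ℕ) (x : ℝ) :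
    (a / b) ^ m * m * a ^ (2 * m) * x / (((a / b) ^ m) ^ 2 + (a / b) ^ (2 * m))
      = m / 2 * (a * b) ^ m * x := by
  rw [← pow_mul, mul_comm m 2, pow_mul, div_pow, div_pow, mul_pow]
  field_simp
  ring

lemma sq_sum_abs_Icc_le (a : ℤ → ℝ) {m : ℕ} (hm : 1 ≤ m) :
    (∑ k ∈ Icc (-(m : ℤ)) m, |a k|) ^ 2 ≤ 3 * m * ∑ k ∈ Icc (-(m : ℤ)) m, a k ^ 2 := by
  have hcard : (#(Icc (-(m : ℤ)) m) : ℝ) = 2 * m + 1 := by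
    rw [Int.card_Icc, show (m : ℤ) + 1 - -m = ((2 * m + 1 : ℕ) : ℤ) by push_cast; ring,
      Int.toNat_natCast]
    push_cast; ring
  calc (∑ k ∈ Icc (-(m : ℤ)) m, |a k|) ^ 2
      ≤ #(Icc (-(m : ℤ)) m) * ∑ k ∈ Icc (-(m : ℤ)) m, |a k| ^ 2 := sq_sum_le_card_mul_sum_sq
    _ ≤ 3 * m * ∑ k ∈ Icc (-(m : ℤ)) m, a k ^ 2 := by
      simp only [sq_abs, hcard]
      gcongr
      exact_mod_cast (by omega : 2 * m + 1 ≤ 3 * m)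

lemma ofReal_sq_div_six_le_tsum {re r0 : ℝ} (hre : 0 < re) (hr0 : 0 < r0) (f : ℕ → ℤ → ℝ)
    {m : ℕ} (hm : 1 ≤ m) :
    ENNReal.ofReal ((Real.sqrt (re * r0) ^ m * ∑ k ∈ Icc (-(m : ℤ)) m, |f m k|) ^ 2 / 6)
      ≤ ∑' n : ℕ, ∑ k ∈ Icc (-(n : ℤ)) n, ENNReal.ofReal ((re / r0) ^ m * n * re ^ (2 * n) *
          f n k ^ 2 / (((re / r0) ^ m) ^ 2 + (re / r0) ^ (2 * n))) := by
  refine le_trans ?_ (ENNReal.le_tsum m)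
  simp only [pow_mul_div_sq_add_pow_two_mul_eq hre.ne' hr0.ne']
  rw [← ENNReal.ofReal_sum_of_nonneg fun k _ => by positivity, ← mul_sum]
  refine ENNReal.ofReal_le_ofReal ?_
  have hpow : 0 ≤ (re * r0) ^ m := by positivity
  calc (Real.sqrt (re * r0) ^ m * ∑ k ∈ Icc (-(m : ℤ)) m, |f m k|) ^ 2 / 6
      = (re * r0) ^ m * (∑ k ∈ Icc (-(m : ℤ)) m, |f m k|) ^ 2 / 6 := by
        rw [mul_pow, ← pow_mul, mul_comm m 2, pow_mul, Real.sq_sqrt (by positivity)]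
    _ ≤ (re * r0) ^ m * (3 * m * ∑ k ∈ Icc (-(m : ℤ)) m, f m k ^ 2) / 6 := by
        gcongr; exact sq_sum_abs_Icc_le (f m) hm
    _ = m / 2 * (re * r0) ^ m * ∑ k ∈ Icc (-(m : ℤ)) m, f m k ^ 2 := by ring

lemma limsup_eq_top_of_tendsto_comp {ι α : Type*} {p : Filter ι} [p.NeBot] {l : Filter α}
    {x : ι → α} {E : α → ℝ≥0∞} (hx : Tendsto x p l) (hE : Tendsto (E ∘ x) p (𝓝 ⊤)) :
    limsup E l = ⊤ :=
  top_unique (hE.limsup_eq ▸ hx.limsup_comp_le_limsup)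

/-- If `limsup (r_e r_0)^{n/2} Σ_k |f_n^k| = ∞`, then taking `δ = ρ^m` along a suitable
sequence `m → ∞`, `E_δ = Σ_n Σ_k δ n r_e^{2n}|f_n^k|²/(δ² + ρ^{2n})` tends to infinity,
so `limsup_{δ→0} E_δ = ∞`. -/
theorem statement8 (re r0 : ℝ) (h1 : 0 < re) (h2 : re < r0)
    (ρ : ℝ) (hρ : ρ = re / r0)
    (f : ℕ → ℤ → ℝ)
    (E : ℝ → ℝ≥0∞)
    (hE : ∀ δ : ℝ, E δ = ∑' n : ℕ, ∑ k ∈ Finset.Icc (-(n : ℤ)) (n : ℤ),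
        ENNReal.ofReal (δ * (n : ℝ) * re ^ (2 * n) * (f n k) ^ 2 / (δ ^ 2 + ρ ^ (2 * n))))
    (hlim : ∀ M : ℝ, ∃ᶠ n : ℕ in atTop,
        M < Real.sqrt (re * r0) ^ n * ∑ k ∈ Finset.Icc (-(n : ℤ)) (n : ℤ), |f n k|) :
    ∃ m : ℕ → ℕ, StrictMono m ∧
      Tendsto (fun j => E (ρ ^ m j)) atTop (nhds ⊤) ∧
      limsup E (nhdsWithin (0 : ℝ) (Set.Ioi 0)) = ⊤ := by
  have hr0 : 0 < r0 := h1.trans h2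
  have hρ0 : 0 < ρ := hρ ▸ div_pos h1 hr0
  have hρ1 : ρ < 1 := hρ ▸ (div_lt_one hr0).2 h2
  obtain ⟨m, hm_mono, hm⟩ := extraction_forall_of_frequently
    fun j : ℕ => (hlim j).and_eventually (eventually_ge_atTop 1)
  have hEm : Tendsto (fun j => E (ρ ^ m j)) atTop (𝓝 ⊤) := by
    have hsq : Tendsto (fun j : ℕ => ENNReal.ofReal ((j : ℝ) ^ 2 / 6)) atTop (𝓝 ⊤) :=
      ENNReal.tendsto_ofReal_atTop.comp <|
        ((tendsto_pow_atTop two_ne_zero).comp tendsto_natCast_atTop_atTop).atTop_div_const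
          (by norm_num)
    refine tendsto_nhds_top_mono hsq (Eventually.of_forall fun j => ?_)
    show _ ≤ E (ρ ^ m j)
    rw [hE, hρ]
    refine (ENNReal.ofReal_le_ofReal ?_).trans (ofReal_sq_div_six_le_tsum h1 hr0 f (hm j).2)
    gcongr
    exact (hm j).1.le
  have hδ : Tendsto (fun j => ρ ^ m j) atTop (𝓝[>] 0) :=
    tendsto_nhdsWithin_of_tendsto_nhds_of_eventually_within _
      ((tendsto_pow_atTop_nhds_zero_of_lt_one hρ0.le hρ1).comp hm_mono.tendsto_atTop)
      (Eventually.of_forall fun j => pow_pos hρ0 _)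
  exact ⟨m, hm_mono, hEm, limsup_eq_top_of_tendsto_comp hδ hEm⟩
end

section
/- Let κ_c, κ_s, κ_m be complex numbers, 0 < ρ < 1, n a positive integer, and suppose the determinant D_n := (n²+n)(κ_s−κ_c)(κ_s−κ_m) − ρ^{2n+1}((n+1)κ_s + nκ_c)((n+1)κ_m + nκ_s) is nonzero. Then the linear system a r_0^n = b r_0^n + c r_0^{-n-1}; e r_e^n + d r_e^{-n-1} = b r_e^n + c r_e^{-n-1}; κ_c a n r_0^n = κ_s(b n r_0^n − c(n+1)r_0^{-n-1}); κ_s(b n r_e^n − c(n+1)r_e^{-n-1}) = κ_m(e n r_e^n − d(n+1)r_e^{-n-1}), with ρ = r_e/r_0 and e given, has the unique solution b = e·(−ρ^{2n+1}κ_m(2n+1)((n+1)κ_s + nκ_c))/D_n and c = e·(−r_e^{2n+1}κ_m n(2n+1)(κ_s − κ_c))/D_n. -/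
/-!
Multiplying each matching condition by `r^(n+1)` turns the system into polynomial equations.
The two conditions at `r_0` eliminate `a`, the two at `r_e` eliminate `d`, and what remains is a
`2 × 2` system for `(b, c)` whose determinant is `-r_0^(2n+1) D_n`; Cramer's rule gives `b`
and `c`.
-/

theorem cramer_two_by_two {K : Type*} [CommRing K] {p q s t w b c : K}
    (h₁ : p * b = q * c) (h₂ : s * b + t * c = w) :
    b * (p * t + q * s) = q * w ∧ c * (p * t + q * s) = p * w :=
  ⟨by linear_combination t * h₁ + q * h₂, by linear_combination -(s * h₁) + p * h₂⟩

section ClearedSystem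

variable {K : Type*} [Field K] (N κc κs κm : K) {R E a b c d e : K}

theorem b_c_relation_at_r0 (hval : a * R = b * R + c)
    (hflux : κc * (a * N * R) = κs * (b * N * R - c * (N + 1))) :
    N * (κs - κc) * R * b = ((N + 1) * κs + N * κc) * c := by
  linear_combination κc * N * hval - hflux

theorem b_c_relation_at_re (hval : e * E + d = b * E + c)
    (hflux : κs * (b * N * E - c * (N + 1)) = κm * (e * N * E - d * (N + 1))) :
    (N * κs + (N + 1) * κm) * E * b + (N + 1) * (κm - κs) * c = κm * (2 * N + 1) * e * E := by
  linear_combination hflux - κm * (N + 1) * hval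

/-- The determinant `D_n` of the mode-`n` system, with `N = n` and `ρ' = ρ^(2n+1)`. -/
def transmissionDet (N ρ' : K) : K :=
  (N ^ 2 + N) * (κs - κc) * (κs - κm)
    - ρ' * ((N + 1) * κs + N * κc) * ((N + 1) * κm + N * κs)

/-- The system after clearing denominators, with `R = r_0^(2n+1)` and `r_e^(2n+1) = ρ' R`. -/
theorem transmission_cleared_solution {ρ' : K} (hR : R ≠ 0)
    (hval₀ : a * R = b * R + c)
    (hflux₀ : κc * (a * N * R) = κs * (b * N * R - c * (N + 1)))
    (hvalₑ : e * (ρ' * R) + d = b * (ρ' * R) + c)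
    (hfluxₑ : κs * (b * N * (ρ' * R) - c * (N + 1)) = κm * (e * N * (ρ' * R) - d * (N + 1))) :
    b * transmissionDet κc κs κm N ρ'
        = e * (-ρ' * κm * (2 * N + 1) * ((N + 1) * κs + N * κc))
      ∧ c * transmissionDet κc κs κm N ρ'
        = e * (-(ρ' * R) * κm * N * (2 * N + 1) * (κs - κc)) := by
  obtain ⟨hb, hc⟩ := cramer_two_by_two (b_c_relation_at_r0 N κc κs hval₀ hflux₀)
    (b_c_relation_at_re N κs κm hvalₑ hfluxₑ)
  constructor
  · exact mul_right_cancel₀ hR (by unfold transmissionDet; linear_combination -hb)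
  · exact mul_right_cancel₀ hR (by unfold transmissionDet; linear_combination -hc)

end ClearedSystem

theorem statement11_general (re r0 : ℝ) (h1 : 0 < re) (h2 : re < r0)
    (ρ : ℝ) (hρ : ρ = re / r0)
    (κc κs κm : ℂ) (n : ℕ)
    (D : ℂ)
    (hD : D = ((n : ℂ) ^ 2 + n) * (κs - κc) * (κs - κm)
        - (ρ : ℂ) ^ (2 * n + 1) * (((n : ℂ) + 1) * κs + n * κc)
          * (((n : ℂ) + 1) * κm + n * κs))
    (hD0 : D ≠ 0)
    (a b c d e : ℂ)
    (eq1 : a * (r0 : ℂ) ^ n = b * (r0 : ℂ) ^ n + c / (r0 : ℂ) ^ (n + 1))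
    (eq2 : e * (re : ℂ) ^ n + d / (re : ℂ) ^ (n + 1)
        = b * (re : ℂ) ^ n + c / (re : ℂ) ^ (n + 1))
    (eq3 : κc * (a * n * (r0 : ℂ) ^ n)
        = κs * (b * n * (r0 : ℂ) ^ n - c * ((n : ℂ) + 1) / (r0 : ℂ) ^ (n + 1)))
    (eq4 : κs * (b * n * (re : ℂ) ^ n - c * ((n : ℂ) + 1) / (re : ℂ) ^ (n + 1))
        = κm * (e * n * (re : ℂ) ^ n - d * ((n : ℂ) + 1) / (re : ℂ) ^ (n + 1))) :
    b = e * (-(ρ : ℂ) ^ (2 * n + 1) * κm * (2 * (n : ℂ) + 1)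
              * (((n : ℂ) + 1) * κs + n * κc)) / D
    ∧ c = e * (-(re : ℂ) ^ (2 * n + 1) * κm * n * (2 * (n : ℂ) + 1) * (κs - κc)) / D := by
  have hreN : (re : ℂ) ^ (n + 1) ≠ 0 := pow_ne_zero _ (by exact_mod_cast h1.ne')
  have hr0 : (r0 : ℂ) ≠ 0 := by exact_mod_cast (h1.trans h2).ne'
  have hr0N : (r0 : ℂ) ^ (n + 1) ≠ 0 := pow_ne_zero _ hr0
  have hE : (re : ℂ) ^ (2 * n + 1) = (ρ : ℂ) ^ (2 * n + 1) * (r0 : ℂ) ^ (2 * n + 1) := by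
    rw [hρ, Complex.ofReal_div, div_pow, div_mul_cancel₀ _ (pow_ne_zero _ hr0)]
  have hval₀ : a * (r0 : ℂ) ^ (2 * n + 1) = b * (r0 : ℂ) ^ (2 * n + 1) + c := by
    linear_combination (r0 : ℂ) ^ (n + 1) * eq1 + mul_div_cancel_left₀ c hr0N
  have hflux₀ : κc * (a * n * (r0 : ℂ) ^ (2 * n + 1))
      = κs * (b * n * (r0 : ℂ) ^ (2 * n + 1) - c * ((n : ℂ) + 1)) := by
    linear_combination (r0 : ℂ) ^ (n + 1) * eq3
      - κs * mul_div_cancel_left₀ (c * ((n : ℂ) + 1)) hr0N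
  have hvalₑ : e * (re : ℂ) ^ (2 * n + 1) + d = b * (re : ℂ) ^ (2 * n + 1) + c := by
    linear_combination (re : ℂ) ^ (n + 1) * eq2 + mul_div_cancel_left₀ c hreN
      - mul_div_cancel_left₀ d hreN
  have hfluxₑ : κs * (b * n * (re : ℂ) ^ (2 * n + 1) - c * ((n : ℂ) + 1))
      = κm * (e * n * (re : ℂ) ^ (2 * n + 1) - d * ((n : ℂ) + 1)) := by
    linear_combination (re : ℂ) ^ (n + 1) * eq4
      + κs * mul_div_cancel_left₀ (c * ((n : ℂ) + 1)) hreN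
      - κm * mul_div_cancel_left₀ (d * ((n : ℂ) + 1)) hreN
  rw [hE] at hvalₑ hfluxₑ
  obtain ⟨hb, hc⟩ := transmission_cleared_solution (n : ℂ) κc κs κm (pow_ne_zero _ hr0)
    hval₀ hflux₀ hvalₑ hfluxₑ
  rw [hE]
  exact ⟨(eq_div_iff hD0).2 (hD ▸ hb), (eq_div_iff hD0).2 (hD ▸ hc)⟩

/-- The transmission linear system in each spherical-harmonic mode has the unique solution
`b = e·(−ρ^{2n+1}κ_m(2n+1)((n+1)κ_s + nκ_c))/D_n` and
`c = e·(−r_e^{2n+1}κ_m n(2n+1)(κ_s − κ_c))/D_n` when the determinant `D_n ≠ 0`. -/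
theorem statement11 (re r0 : ℝ) (h1 : 0 < re) (h2 : re < r0)
    (ρ : ℝ) (hρ : ρ = re / r0)
    (κc κs κm : ℂ) (n : ℕ) (hn : 1 ≤ n)
    (D : ℂ)
    (hD : D = ((n : ℂ) ^ 2 + n) * (κs - κc) * (κs - κm)
        - (ρ : ℂ) ^ (2 * n + 1) * (((n : ℂ) + 1) * κs + n * κc)
          * (((n : ℂ) + 1) * κm + n * κs))
    (hD0 : D ≠ 0)
    (a b c d e : ℂ)
    (eq1 : a * (r0 : ℂ) ^ n = b * (r0 : ℂ) ^ n + c / (r0 : ℂ) ^ (n + 1))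
    (eq2 : e * (re : ℂ) ^ n + d / (re : ℂ) ^ (n + 1)
        = b * (re : ℂ) ^ n + c / (re : ℂ) ^ (n + 1))
    (eq3 : κc * (a * n * (r0 : ℂ) ^ n)
        = κs * (b * n * (r0 : ℂ) ^ n - c * ((n : ℂ) + 1) / (r0 : ℂ) ^ (n + 1)))
    (eq4 : κs * (b * n * (re : ℂ) ^ n - c * ((n : ℂ) + 1) / (re : ℂ) ^ (n + 1))
        = κm * (e * n * (re : ℂ) ^ n - d * ((n : ℂ) + 1) / (re : ℂ) ^ (n + 1))) :
    b = e * (-(ρ : ℂ) ^ (2 * n + 1) * κm * (2 * (n : ℂ) + 1)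
              * (((n : ℂ) + 1) * κs + n * κc)) / D
    ∧ c = e * (-(re : ℂ) ^ (2 * n + 1) * κm * n * (2 * (n : ℂ) + 1) * (κs - κc)) / D :=
  statement11_general re r0 h1 h2 ρ hρ κc κs κm n D hD hD0 a b c d e eq1 eq2 eq3 eq4
end

section
/- Let κ_m = 1, κ_c = 1, κ_s = −(−1 + iδ) = 1 − iδ with loss parameter δ ∈ (0,1), and 0 < ρ < 1. Then there exist constants c₁, c₂ > 0 independent of n and δ such that c₁ n²(δ² + ρ^{2n+1}) ≤ |(n²+n)(κ_s−κ_c)(κ_s−κ_m) − ρ^{2n+1}((n+1)κ_s + nκ_c)((n+1)κ_m + nκ_s)| ≤ c₂ n²(δ² + ρ^{2n+1}) for all n ≥ 1. -/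
/-!
With `κ_s − 1 = −iδ` the determinant is
`−((n² + n) δ² (1 − r) + r (2n + 1)²) + i r (2n + 1)² δ` where `r = ρ^{2n+1}`.
Its real part is negative, and alone already has size `≍ n² (δ² + r)` because `r ≤ ρ³ < 1`;
the imaginary part is at most `9 n² r`, so it does not change the order of magnitude.
-/

open Complex

lemma resonance_det_eq (N δ r : ℝ) :
    ((N : ℂ) ^ 2 + N) * ((1 - δ * I) - 1) * ((1 - δ * I) - 1)
        - (r : ℂ) * (((N : ℂ) + 1) * (1 - δ * I) + N * 1) * (((N : ℂ) + 1) * 1 + N * (1 - δ * I))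
      = ((-((N ^ 2 + N) * δ ^ 2 * (1 - r) + r * (2 * N + 1) ^ 2) : ℝ) : ℂ)
        + ((r * (2 * N + 1) ^ 2 * δ : ℝ) : ℂ) * I := by
  push_cast
  linear_combination ((N ^ 2 + N) * δ ^ 2 - r * (N + 1) * N * δ ^ 2 : ℂ) * I_sq

lemma abs_le_norm_ofReal_add_mul_I (x y : ℝ) : |x| ≤ ‖(x : ℂ) + y * I‖ := by
  simpa using abs_re_le_norm ((x : ℂ) + y * I)

lemma norm_ofReal_add_mul_I_le (x y : ℝ) : ‖(x : ℂ) + y * I‖ ≤ |x| + |y| := by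
  simpa using norm_le_abs_re_add_abs_im ((x : ℂ) + y * I)

lemma resonance_lower_bound {c N δ r : ℝ} (hc : c ≤ 1 - r) (hc4 : c ≤ 4)
    (hN : 0 ≤ N) (hr0 : 0 ≤ r) (hr1 : r ≤ 1) :
    c * N ^ 2 * (δ ^ 2 + r) ≤ (N ^ 2 + N) * δ ^ 2 * (1 - r) + r * (2 * N + 1) ^ 2 := by
  have hδ : c * (N ^ 2 * δ ^ 2) ≤ (N ^ 2 + N) * δ ^ 2 * (1 - r) :=
    calc c * (N ^ 2 * δ ^ 2) ≤ (1 - r) * (N ^ 2 * δ ^ 2) := by gcongr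
      _ ≤ (1 - r) * ((N ^ 2 + N) * δ ^ 2) := by gcongr; linarith
      _ = _ := by ring
  have hr : c * (N ^ 2 * r) ≤ r * (2 * N + 1) ^ 2 :=
    calc c * (N ^ 2 * r) ≤ 4 * (N ^ 2 * r) := by gcongr
      _ ≤ r * (2 * N + 1) ^ 2 := by nlinarith
  linarith [show c * N ^ 2 * (δ ^ 2 + r) = c * (N ^ 2 * δ ^ 2) + c * (N ^ 2 * r) by ring]

lemma resonance_upper_bound {N δ r : ℝ} (hN : 1 ≤ N) (hδ1 : δ ≤ 1) (hr0 : 0 ≤ r) :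
    (N ^ 2 + N) * δ ^ 2 * (1 - r) + r * (2 * N + 1) ^ 2 + r * (2 * N + 1) ^ 2 * δ
      ≤ 18 * N ^ 2 * (δ ^ 2 + r) := by
  have hsq : (2 * N + 1) ^ 2 ≤ 9 * N ^ 2 := by nlinarith
  have h₁ : (N ^ 2 + N) * δ ^ 2 * (1 - r) ≤ 2 * N ^ 2 * δ ^ 2 := by
    have : (N ^ 2 + N) * (1 - r) ≤ 2 * N ^ 2 := by nlinarith
    nlinarith [sq_nonneg δ]
  have h₂ : r * (2 * N + 1) ^ 2 * δ ≤ r * (2 * N + 1) ^ 2 :=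
    mul_le_of_le_one_right (by positivity) hδ1
  nlinarith [mul_le_mul_of_nonneg_left hsq hr0, sq_nonneg (N * δ)]

/-- With `κ_m = κ_c = 1`, `κ_s = 1 − iδ`, the determinant
`D_n = (n²+n)(κ_s−κ_c)(κ_s−κ_m) − ρ^{2n+1}((n+1)κ_s + nκ_c)((n+1)κ_m + nκ_s)`
satisfies `|D_n| ≍ n²(δ² + ρ^{2n+1})` with constants independent of `n ≥ 1` and `δ ∈ (0,1)`. -/
theorem statement12 (ρ : ℝ) (h0 : 0 < ρ) (h1 : ρ < 1) :
    ∃ c₁ c₂ : ℝ, 0 < c₁ ∧ 0 < c₂ ∧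
      ∀ δ : ℝ, 0 < δ → δ < 1 → ∀ n : ℕ, 1 ≤ n →
        c₁ * n ^ 2 * (δ ^ 2 + ρ ^ (2 * n + 1)) ≤
          ‖((n : ℂ) ^ 2 + n) * ((1 - δ * Complex.I) - 1)
              * ((1 - δ * Complex.I) - 1)
            - (ρ : ℂ) ^ (2 * n + 1)
              * (((n : ℂ) + 1) * (1 - δ * Complex.I) + n * 1)
              * (((n : ℂ) + 1) * 1 + n * (1 - δ * Complex.I))‖
        ∧ ‖((n : ℂ) ^ 2 + n) * ((1 - δ * Complex.I) - 1)
              * ((1 - δ * Complex.I) - 1)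
            - (ρ : ℂ) ^ (2 * n + 1)
              * (((n : ℂ) + 1) * (1 - δ * Complex.I) + n * 1)
              * (((n : ℂ) + 1) * 1 + n * (1 - δ * Complex.I))‖
          ≤ c₂ * n ^ 2 * (δ ^ 2 + ρ ^ (2 * n + 1)) := by
  have hρ3 : ρ ^ 3 < 1 := pow_lt_one₀ h0.le h1 (by norm_num)
  refine ⟨min (1 - ρ ^ 3) 4, 18, lt_min (by linarith) (by norm_num), by norm_num, ?_⟩
  intro δ hδ0 hδ1 n hn
  have hN : (1 : ℝ) ≤ n := by exact_mod_cast hn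
  have hr0 : 0 ≤ ρ ^ (2 * n + 1) := by positivity
  have hrρ : ρ ^ (2 * n + 1) ≤ ρ ^ 3 := pow_le_pow_of_le_one h0.le h1.le (by omega)
  have hdet := resonance_det_eq n δ (ρ ^ (2 * n + 1))
  simp only [ofReal_natCast, ofReal_pow] at hdet
  rw [hdet]
  set P := (n ^ 2 + n) * δ ^ 2 * (1 - ρ ^ (2 * n + 1)) + ρ ^ (2 * n + 1) * (2 * n + 1) ^ 2
  set B := ρ ^ (2 * n + 1) * (2 * n + 1) ^ 2 * δ
  have hP : |-P| = P := by
    rw [abs_neg, abs_of_nonneg]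
    have : 0 ≤ 1 - ρ ^ (2 * n + 1) := by linarith
    positivity
  have hB : |B| = B := abs_of_nonneg (by positivity)
  constructor
  · have hc : min (1 - ρ ^ 3) 4 ≤ 1 - ρ ^ (2 * n + 1) := by linarith [min_le_left (1 - ρ ^ 3) 4]
    calc _ ≤ P := resonance_lower_bound hc (min_le_right _ _) (by linarith) hr0 (by linarith)
      _ = |-P| := hP.symm
      _ ≤ _ := abs_le_norm_ofReal_add_mul_I _ _
  · refine (norm_ofReal_add_mul_I_le _ _).trans ?_
    rw [hP, hB]
    exact resonance_upper_bound hN hδ1.le hr0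
end

section
/- With κ_m = κ_c = 1 and κ_s = 1 − iδ, δ ∈ (0,1), 0 < ρ < 1, r_e > 0, the coefficients b_n = −ρ^{2n+1}κ_m(2n+1)((n+1)κ_s + nκ_c)/D_n and c_n = −r_e^{2n+1}κ_m n(2n+1)(κ_s − κ_c)/D_n, where D_n = (n²+n)(κ_s−κ_c)(κ_s−κ_m) − ρ^{2n+1}((n+1)κ_s+nκ_c)((n+1)κ_m+nκ_s), satisfy |b_n| ≍ ρ^{2n}/(δ² + ρ^{2n}) and |c_n| ≍ δ r_e^{2n}/(δ² + ρ^{2n}), with implicit constants independent of n and δ. -/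
/-!
With `κ_s - 1 = -iδ` one computes `D_n = -A_n + i B_n`, where
`A_n = n(n+1)δ²(1 - ρ^{2n+1}) + ρ^{2n+1}(2n+1)²` and `B_n = ρ^{2n+1}(2n+1)²δ ≤ A_n`, so
`|D_n| ≍ A_n ≍ n²(δ² + ρ^{2n})`. The numerator of `b_n` has real part `-ρ^{2n+1}(2n+1)²`
dominating its imaginary part, hence modulus `≍ n²ρ^{2n}`, while the numerator of `c_n` is
`i δ r_e^{2n+1} n(2n+1)`, of modulus `≍ δ r_e^{2n} n²`. Dividing, the factors `n²` cancel.
-/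

/-- The determinant `D_n` with `κ_m = κ_c = 1`, `κ_s = 1 − iδ`. -/
noncomputable def Dn (ρ δ : ℝ) (n : ℕ) : ℂ :=
  ((n : ℂ) ^ 2 + n) * ((1 - δ * Complex.I) - 1) * ((1 - δ * Complex.I) - 1)
    - (ρ : ℂ) ^ (2 * n + 1) * (((n : ℂ) + 1) * (1 - δ * Complex.I) + n * 1)
      * (((n : ℂ) + 1) * 1 + n * (1 - δ * Complex.I))

/-- The coefficient `b_n = −ρ^{2n+1}κ_m(2n+1)((n+1)κ_s + nκ_c)/D_n`. -/
noncomputable def bn (ρ δ re : ℝ) (n : ℕ) : ℂ :=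
  -(ρ : ℂ) ^ (2 * n + 1) * 1 * (2 * (n : ℂ) + 1)
      * (((n : ℂ) + 1) * (1 - δ * Complex.I) + n * 1) / Dn ρ δ n

/-- The coefficient `c_n = −r_e^{2n+1}κ_m n(2n+1)(κ_s − κ_c)/D_n`. -/
noncomputable def cn (ρ δ re : ℝ) (n : ℕ) : ℂ :=
  -(re : ℂ) ^ (2 * n + 1) * 1 * n * (2 * (n : ℂ) + 1)
      * ((1 - δ * Complex.I) - 1) / Dn ρ δ n

open Complex

lemma Complex.norm_le_two_mul_abs_re {z : ℂ} (h : |z.im| ≤ |z.re|) :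
    ‖z‖ ≤ 2 * |z.re| := by
  linarith [norm_le_abs_re_add_abs_im z]

lemma div_bounds_of_bounds {x y X Y a b c d : ℝ} (ha : 0 ≤ a) (hc : 0 < c) (hd : 0 < d)
    (hX : 0 ≤ X) (hY : 0 < Y) (hxl : a * X ≤ x) (hxu : x ≤ b * X) (hyl : c * Y ≤ y)
    (hyu : y ≤ d * Y) : a / d * (X / Y) ≤ x / y ∧ x / y ≤ b / c * (X / Y) := by
  have hx : 0 ≤ x := (mul_nonneg ha hX).trans hxl
  have hy : 0 < y := (mul_pos hc hY).trans_le hyl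
  constructor
  · calc a / d * (X / Y) = a * X / (d * Y) := by rw [div_mul_div_comm]
      _ ≤ x / (d * Y) := by gcongr
      _ ≤ x / y := div_le_div_of_nonneg_left hx hy hyu
  · calc x / y ≤ b * X / y := by gcongr
      _ ≤ b * X / (c * Y) := div_le_div_of_nonneg_left (hx.trans hxu) (by positivity) hyl
      _ = b / c * (X / Y) := by rw [div_mul_div_comm]

noncomputable def bnNum (ρ δ : ℝ) (n : ℕ) : ℂ :=
  -(ρ : ℂ) ^ (2 * n + 1) * 1 * (2 * (n : ℂ) + 1)
      * (((n : ℂ) + 1) * (1 - δ * Complex.I) + n * 1)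

section Coefficients

variable {ρ δ : ℝ} {n : ℕ}

lemma Dn_re : (Dn ρ δ n).re
    = -(n * (n + 1) * δ ^ 2 * (1 - ρ ^ (2 * n + 1)) + ρ ^ (2 * n + 1) * (2 * n + 1) ^ 2) := by
  simp only [Dn, ← ofReal_natCast, ← ofReal_pow, sub_re, sub_im, add_re, add_im, mul_re, mul_im,
    ofReal_re, ofReal_im, I_re, I_im, one_re, one_im]
  ring

lemma Dn_im : (Dn ρ δ n).im = ρ ^ (2 * n + 1) * (2 * n + 1) ^ 2 * δ := by
  simp only [Dn, ← ofReal_natCast, ← ofReal_pow, sub_re, sub_im, add_re, add_im, mul_re, mul_im,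
    ofReal_re, ofReal_im, I_re, I_im, one_re, one_im]
  ring

lemma bnNum_re : (bnNum ρ δ n).re = -(ρ ^ (2 * n + 1) * (2 * n + 1) ^ 2) := by
  simp only [bnNum, ← ofReal_natCast, ← ofReal_pow, sub_re, sub_im, add_re, add_im, mul_re,
    mul_im, neg_re, neg_im, ofReal_re, ofReal_im, I_re, I_im, one_re, one_im, re_ofNat, im_ofNat]
  ring

lemma bnNum_im : (bnNum ρ δ n).im = ρ ^ (2 * n + 1) * (2 * n + 1) * (n + 1) * δ := by
  simp only [bnNum, ← ofReal_natCast, ← ofReal_pow, sub_re, sub_im, add_re, add_im, mul_re,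
    mul_im, neg_re, neg_im, ofReal_re, ofReal_im, I_re, I_im, one_re, one_im, re_ofNat, im_ofNat]
  ring

lemma bn_eq_div (re : ℝ) : bn ρ δ re n = bnNum ρ δ n / Dn ρ δ n := rfl

lemma norm_cn {re : ℝ} (hre : 0 < re) (hδ : 0 < δ) :
    ‖cn ρ δ re n‖ = re ^ (2 * n + 1) * n * (2 * n + 1) * δ / ‖Dn ρ δ n‖ := by
  have hnum : -(re : ℂ) ^ (2 * n + 1) * 1 * n * (2 * (n : ℂ) + 1) * ((1 - δ * I) - 1)
      = ((re ^ (2 * n + 1) * n * (2 * n + 1) * δ : ℝ) : ℂ) * I := by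
    push_cast; ring
  rw [cn, norm_div, hnum, norm_mul, norm_I, mul_one, norm_real, Real.norm_of_nonneg (by positivity)]

lemma neg_Dn_re_lower_bound (h0 : 0 < ρ) (h1 : ρ < 1) (hn : 1 ≤ n) :
    ρ * (1 - ρ) * (n ^ 2 * (δ ^ 2 + ρ ^ (2 * n))) ≤ -(Dn ρ δ n).re := by
  have hm : (1 : ℝ) ≤ n := by exact_mod_cast hn
  rw [Dn_re, neg_neg, pow_succ ρ (2 * n)]
  set m : ℝ := (n : ℝ)
  set R := ρ ^ (2 * n)
  have hRρ : R * ρ ≤ ρ := mul_le_of_le_one_left h0.le (pow_le_one₀ h0.le h1.le)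
  have hδ_part : ρ * (1 - ρ) * (m ^ 2 * δ ^ 2) ≤ m * (m + 1) * δ ^ 2 * (1 - R * ρ) := by
    have : ρ * (1 - ρ) ≤ 1 - R * ρ := by nlinarith
    have : m ^ 2 ≤ m * (m + 1) := by nlinarith
    calc ρ * (1 - ρ) * (m ^ 2 * δ ^ 2) ≤ (1 - R * ρ) * (m * (m + 1) * δ ^ 2) := by
          gcongr; linarith
      _ = _ := by ring
  have hR_part : ρ * (1 - ρ) * (m ^ 2 * R) ≤ R * ρ * (2 * m + 1) ^ 2 := by
    have : (1 - ρ) * m ^ 2 ≤ (2 * m + 1) ^ 2 := by nlinarith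
    calc ρ * (1 - ρ) * (m ^ 2 * R) = R * ρ * ((1 - ρ) * m ^ 2) := by ring
      _ ≤ R * ρ * (2 * m + 1) ^ 2 := by gcongr
  linarith

lemma neg_Dn_re_upper_bound (h0 : 0 ≤ ρ) (h1 : ρ ≤ 1) (hn : 1 ≤ n) :
    -(Dn ρ δ n).re ≤ 9 * (n ^ 2 * (δ ^ 2 + ρ ^ (2 * n))) := by
  have hm : (1 : ℝ) ≤ n := by exact_mod_cast hn
  rw [Dn_re, neg_neg, pow_succ ρ (2 * n)]
  set m : ℝ := (n : ℝ)
  set R := ρ ^ (2 * n)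
  have hR : 0 ≤ R := by positivity
  have hRρ : R * ρ ≤ R := mul_le_of_le_one_right hR h1
  have hδ_part : m * (m + 1) * δ ^ 2 * (1 - R * ρ) ≤ 2 * m ^ 2 * δ ^ 2 := by
    have : m * (m + 1) ≤ 2 * m ^ 2 := by nlinarith
    have : 0 ≤ R * ρ := by positivity
    have : 0 ≤ m * (m + 1) * δ ^ 2 := by positivity
    nlinarith
  have hR_part : R * ρ * (2 * m + 1) ^ 2 ≤ 9 * m ^ 2 * R := by
    have : (2 * m + 1) ^ 2 ≤ 9 * m ^ 2 := by nlinarith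
    calc R * ρ * (2 * m + 1) ^ 2 ≤ R * (9 * m ^ 2) := by gcongr
      _ = 9 * m ^ 2 * R := by ring
  nlinarith

lemma abs_Dn_im_le_abs_re (h0 : 0 ≤ ρ) (h1 : ρ ≤ 1) (hδ0 : 0 ≤ δ) (hδ1 : δ ≤ 1) :
    |(Dn ρ δ n).im| ≤ |(Dn ρ δ n).re| := by
  have hP1 : ρ ^ (2 * n + 1) ≤ 1 := pow_le_one₀ h0 h1
  have hδ_part : 0 ≤ n * (n + 1) * δ ^ 2 * (1 - ρ ^ (2 * n + 1)) :=
    mul_nonneg (by positivity) (by linarith)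
  have hR_part : ρ ^ (2 * n + 1) * (2 * n + 1) ^ 2 * δ ≤ ρ ^ (2 * n + 1) * (2 * n + 1) ^ 2 :=
    mul_le_of_le_one_right (by positivity) hδ1
  rw [Dn_im, Dn_re, abs_neg, abs_of_nonneg (by positivity), abs_of_nonneg (by positivity)]
  linarith

lemma norm_Dn_bounds (h0 : 0 < ρ) (h1 : ρ < 1) (hδ0 : 0 ≤ δ) (hδ1 : δ ≤ 1)
    (hn : 1 ≤ n) :
    ρ * (1 - ρ) * (n ^ 2 * (δ ^ 2 + ρ ^ (2 * n))) ≤ ‖Dn ρ δ n‖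
      ∧ ‖Dn ρ δ n‖ ≤ 18 * (n ^ 2 * (δ ^ 2 + ρ ^ (2 * n))) := by
  have hlow := neg_Dn_re_lower_bound (δ := δ) h0 h1 hn
  have hρ : 0 < 1 - ρ := sub_pos.2 h1
  have hpos : 0 ≤ ρ * (1 - ρ) * (n ^ 2 * (δ ^ 2 + ρ ^ (2 * n))) := by positivity
  have hre : |(Dn ρ δ n).re| = -(Dn ρ δ n).re := abs_of_nonpos (by linarith)
  constructor
  · exact hlow.trans ((neg_le_abs _).trans (abs_re_le_norm _))
  · calc ‖Dn ρ δ n‖ ≤ 2 * |(Dn ρ δ n).re| :=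
          norm_le_two_mul_abs_re (abs_Dn_im_le_abs_re h0.le h1.le hδ0 hδ1)
      _ ≤ 18 * (n ^ 2 * (δ ^ 2 + ρ ^ (2 * n))) := by
          rw [hre]; linarith [neg_Dn_re_upper_bound (δ := δ) h0.le h1.le hn]

lemma norm_bnNum_bounds (h0 : 0 < ρ) (h1 : ρ ≤ 1) (hδ0 : 0 ≤ δ) (hδ1 : δ ≤ 1)
    (hn : 1 ≤ n) :
    4 * ρ * (n ^ 2 * ρ ^ (2 * n)) ≤ ‖bnNum ρ δ n‖
      ∧ ‖bnNum ρ δ n‖ ≤ 18 * (n ^ 2 * ρ ^ (2 * n)) := by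
  have hm : (1 : ℝ) ≤ n := by exact_mod_cast hn
  have hre : |(bnNum ρ δ n).re| = ρ ^ (2 * n) * ρ * (2 * n + 1) ^ 2 := by
    rw [bnNum_re, abs_neg, abs_of_nonneg (by positivity), pow_succ]
  have him : |(bnNum ρ δ n).im| ≤ |(bnNum ρ δ n).re| := by
    rw [hre, bnNum_im, abs_of_nonneg (by positivity), pow_succ]
    have : (n + 1) * δ ≤ 2 * n + 1 := by nlinarith
    calc ρ ^ (2 * n) * ρ * (2 * n + 1) * (n + 1) * δ
        = ρ ^ (2 * n) * ρ * (2 * n + 1) * ((n + 1) * δ) := by ring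
      _ ≤ ρ ^ (2 * n) * ρ * (2 * n + 1) * (2 * n + 1) := by gcongr
      _ = ρ ^ (2 * n) * ρ * (2 * n + 1) ^ 2 := by ring
  have hR : 0 < ρ ^ (2 * n) := by positivity
  constructor
  · calc 4 * ρ * (n ^ 2 * ρ ^ (2 * n)) ≤ ρ ^ (2 * n) * ρ * (2 * n + 1) ^ 2 := by
          nlinarith [mul_pos hR h0]
      _ ≤ ‖bnNum ρ δ n‖ := hre ▸ abs_re_le_norm _
  · calc ‖bnNum ρ δ n‖ ≤ 2 * (ρ ^ (2 * n) * ρ * (2 * n + 1) ^ 2) :=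
          hre ▸ norm_le_two_mul_abs_re him
      _ ≤ 18 * (n ^ 2 * ρ ^ (2 * n)) := by
          have : (2 * n + 1) ^ 2 ≤ 9 * (n : ℝ) ^ 2 := by nlinarith
          have : ρ * (2 * n + 1) ^ 2 ≤ 9 * (n : ℝ) ^ 2 := by nlinarith
          nlinarith

lemma cnNum_bounds {re : ℝ} (hre : 0 < re) (hδ : 0 < δ) (hn : 1 ≤ n) :
    2 * re * (n ^ 2 * (δ * re ^ (2 * n))) ≤ re ^ (2 * n + 1) * n * (2 * n + 1) * δ
      ∧ re ^ (2 * n + 1) * n * (2 * n + 1) * δ ≤ 3 * re * (n ^ 2 * (δ * re ^ (2 * n))) := by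
  have hm : (1 : ℝ) ≤ n := by exact_mod_cast hn
  have hk : 0 ≤ re * re ^ (2 * n) * δ := by positivity
  constructor
  · calc 2 * re * (n ^ 2 * (δ * re ^ (2 * n))) = re * re ^ (2 * n) * δ * (2 * n ^ 2) := by ring
      _ ≤ re * re ^ (2 * n) * δ * (n * (2 * n + 1)) :=
          mul_le_mul_of_nonneg_left (by nlinarith) hk
      _ = re ^ (2 * n + 1) * n * (2 * n + 1) * δ := by ring
  · calc re ^ (2 * n + 1) * n * (2 * n + 1) * δ = re * re ^ (2 * n) * δ * (n * (2 * n + 1)) := by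
          ring
      _ ≤ re * re ^ (2 * n) * δ * (3 * n ^ 2) := mul_le_mul_of_nonneg_left (by nlinarith) hk
      _ = 3 * re * (n ^ 2 * (δ * re ^ (2 * n))) := by ring

end Coefficients

lemma exists_norm_bn_bounds {ρ : ℝ} (h0 : 0 < ρ) (h1 : ρ < 1) (re : ℝ) :
    ∃ c C : ℝ, 0 < c ∧ 0 < C ∧ ∀ δ : ℝ, 0 < δ → δ < 1 → ∀ n : ℕ, 1 ≤ n →
      c * (ρ ^ (2 * n) / (δ ^ 2 + ρ ^ (2 * n))) ≤ ‖bn ρ δ re n‖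
        ∧ ‖bn ρ δ re n‖ ≤ C * (ρ ^ (2 * n) / (δ ^ 2 + ρ ^ (2 * n))) := by
  have hρ : 0 < ρ * (1 - ρ) := mul_pos h0 (sub_pos.2 h1)
  refine ⟨4 * ρ / 18, 18 / (ρ * (1 - ρ)), by positivity, by positivity, ?_⟩
  intro δ hδ0 hδ1 n hn
  have hn2 : (n : ℝ) ^ 2 ≠ 0 := by positivity
  obtain ⟨hxl, hxu⟩ := norm_bnNum_bounds h0 h1.le hδ0.le hδ1.le hn
  obtain ⟨hyl, hyu⟩ := norm_Dn_bounds h0 h1 hδ0.le hδ1.le hn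
  rw [bn_eq_div, norm_div, ← mul_div_mul_left (ρ ^ (2 * n)) _ hn2]
  exact div_bounds_of_bounds (by positivity) hρ (by norm_num) (by positivity) (by positivity)
    hxl hxu hyl hyu

lemma exists_norm_cn_bounds {ρ re : ℝ} (h0 : 0 < ρ) (h1 : ρ < 1) (hre : 0 < re) :
    ∃ c C : ℝ, 0 < c ∧ 0 < C ∧ ∀ δ : ℝ, 0 < δ → δ < 1 → ∀ n : ℕ, 1 ≤ n →
      c * (δ * re ^ (2 * n) / (δ ^ 2 + ρ ^ (2 * n))) ≤ ‖cn ρ δ re n‖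
        ∧ ‖cn ρ δ re n‖ ≤ C * (δ * re ^ (2 * n) / (δ ^ 2 + ρ ^ (2 * n))) := by
  have hρ : 0 < ρ * (1 - ρ) := mul_pos h0 (sub_pos.2 h1)
  refine ⟨2 * re / 18, 3 * re / (ρ * (1 - ρ)), by positivity, by positivity, ?_⟩
  intro δ hδ0 hδ1 n hn
  have hn2 : (n : ℝ) ^ 2 ≠ 0 := by positivity
  obtain ⟨hxl, hxu⟩ := cnNum_bounds hre hδ0 hn
  obtain ⟨hyl, hyu⟩ := norm_Dn_bounds h0 h1 hδ0.le hδ1.le hn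
  rw [norm_cn hre hδ0, ← mul_div_mul_left (δ * re ^ (2 * n)) _ hn2]
  exact div_bounds_of_bounds (by positivity) hρ (by norm_num) (by positivity) (by positivity)
    hxl hxu hyl hyu

/-- With `κ_m = κ_c = 1` and `κ_s = 1 − iδ`, one has `|b_n| ≍ ρ^{2n}/(δ² + ρ^{2n})` and
`|c_n| ≍ δ r_e^{2n}/(δ² + ρ^{2n})`, with constants independent of `n ≥ 1`, `δ ∈ (0,1)`. -/
theorem statement13 (ρ re : ℝ) (h0 : 0 < ρ) (h1 : ρ < 1) (hre : 0 < re) :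
    ∃ c₁ c₂ : ℝ, 0 < c₁ ∧ 0 < c₂ ∧
      ∀ δ : ℝ, 0 < δ → δ < 1 → ∀ n : ℕ, 1 ≤ n →
        (c₁ * (ρ ^ (2 * n) / (δ ^ 2 + ρ ^ (2 * n))) ≤ ‖bn ρ δ re n‖
          ∧ ‖bn ρ δ re n‖ ≤ c₂ * (ρ ^ (2 * n) / (δ ^ 2 + ρ ^ (2 * n))))
        ∧ (c₁ * (δ * re ^ (2 * n) / (δ ^ 2 + ρ ^ (2 * n))) ≤ ‖cn ρ δ re n‖
          ∧ ‖cn ρ δ re n‖ ≤ c₂ * (δ * re ^ (2 * n) / (δ ^ 2 + ρ ^ (2 * n)))) := by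
  obtain ⟨b, B, hb, hB, hbn⟩ := exists_norm_bn_bounds h0 h1 re
  obtain ⟨c, C, hc, -, hcn⟩ := exists_norm_cn_bounds h0 h1 hre
  refine ⟨min b c, max B C, lt_min hb hc, lt_max_of_lt_left hB, fun δ hδ0 hδ1 n hn => ?_⟩
  obtain ⟨hbl, hbu⟩ := hbn δ hδ0 hδ1 n hn
  obtain ⟨hcl, hcu⟩ := hcn δ hδ0 hδ1 n hn
  have hX : 0 ≤ ρ ^ (2 * n) / (δ ^ 2 + ρ ^ (2 * n)) := by positivity
  have hY : 0 ≤ δ * re ^ (2 * n) / (δ ^ 2 + ρ ^ (2 * n)) := by positivity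
  exact ⟨⟨(mul_le_mul_of_nonneg_right (min_le_left b c) hX).trans hbl,
      hbu.trans (mul_le_mul_of_nonneg_right (le_max_left B C) hX)⟩,
    ⟨(mul_le_mul_of_nonneg_right (min_le_right b c) hY).trans hcl,
      hcu.trans (mul_le_mul_of_nonneg_right (le_max_right B C) hY)⟩⟩
end
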